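/- For any abelian group A and prime p, the natural map from the pro-p completion Â^p := lim_m A/p^m A to its own pro-p completion (Â^p)^{∧,p} := lim_m Â^p / p^m Â^p is bijective; i.e., the pro-p completion of an abelian group is p-adically complete. -/
import Mathlib


/-- The subgroup `nA` of `n`-th multiples of an abelian group `A`. -/
def nMul (A : Type*) [AddCommGroup A] (n : ℕ) : AddSubgroup A where
  carrier := Set.range fun x : A => n • x
  add_mem' := by rintro _ _ ⟨a, rfl⟩ ⟨b, rfl⟩; exact ⟨a + b, by simp [smul_add]⟩
  zero_mem' := ⟨0, smul_zero n⟩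
  neg_mem' := by rintro _ ⟨a, rfl⟩; exact ⟨-a, by simp⟩

/-- The natural projection `A/kA → A/nA` for `n ∣ k`. -/
def projn (A : Type*) [AddCommGroup A] {n k : ℕ} (h : n ∣ k) :
    (A ⧸ nMul A k) →+ (A ⧸ nMul A n) :=
  QuotientAddGroup.map _ _ (AddMonoidHom.id A) (by
    rintro _ ⟨a, rfl⟩
    obtain ⟨c, rfl⟩ := h
    exact ⟨c • a, by simp [mul_smul]⟩)

/-- The map `A/nA → B/nB` induced by a homomorphism `f : A → B`. -/
def qmap {A B : Type*} [AddCommGroup A] [AddCommGroup B] (f : A →+ B) (n : ℕ) :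
    A ⧸ nMul A n →+ B ⧸ nMul B n :=
  QuotientAddGroup.map _ _ f (by
    rintro _ ⟨a, rfl⟩
    exact ⟨f a, by simp [map_nsmul]⟩)

/-- The pro-`p` completion `lim_m A/p^m A` of an abelian group `A`, realized as the subgroup
of compatible families in `∏_m A/p^m A`. -/
def pComp (A : Type*) [AddCommGroup A] (p : ℕ) :
    AddSubgroup (∀ m : ℕ, A ⧸ nMul A (p ^ m)) where
  carrier := { f | ∀ m : ℕ, projn A (pow_dvd_pow p (Nat.le_succ m)) (f (m + 1)) = f m }
  add_mem' := by intro f g hf hg m; simp only [Pi.add_apply, map_add, hf m, hg m]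
  zero_mem' := by intro m; simp
  neg_mem' := by intro f hf m; simp only [Pi.neg_apply, map_neg, hf m]

/-- The canonical map from `A` to its pro-`p` completion. -/
def toPComp (A : Type*) [AddCommGroup A] (p : ℕ) : A →+ pComp A p where
  toFun a := ⟨fun _ => QuotientAddGroup.mk a, fun m => by
    simp [projn, QuotientAddGroup.map_mk]⟩
  map_zero' := rfl
  map_add' a b := by ext m; rfl

section Aux

variable {A : Type*} [AddCommGroup A] {p : ℕ}

lemma nMul_le {n k : ℕ} (h : n ∣ k) : nMul A k ≤ nMul A n := by
  rintro _ ⟨a, rfl⟩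
  obtain ⟨c, rfl⟩ := h
  exact ⟨c • a, by simp [mul_smul]⟩

lemma projn_mk {n k : ℕ} (h : n ∣ k) (a : A) :
    projn A h (QuotientAddGroup.mk a : A ⧸ nMul A k) = QuotientAddGroup.mk a := rfl

/-- Projecting a compatible family down: any representative of `x k` also represents `x m`
for `m ≤ k`. -/
lemma pComp_proj_eq (x : ↥(pComp A p)) {m k : ℕ} (h : m ≤ k) (a : A)
    (ha : (QuotientAddGroup.mk a : A ⧸ nMul A (p ^ k)) = (x : ∀ m, A ⧸ nMul A (p ^ m)) k) :
    (QuotientAddGroup.mk a : A ⧸ nMul A (p ^ m)) = (x : ∀ m, A ⧸ nMul A (p ^ m)) m := by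
  induction k with
  | zero => obtain rfl : m = 0 := Nat.le_zero.mp h; exact ha
  | succ k ih =>
    rcases Nat.lt_or_ge m (k + 1) with h' | h'
    · refine ih (Nat.lt_succ_iff.mp h') ?_
      have hc := x.2 k
      rw [← hc, ← ha, projn_mk]
    · obtain rfl : m = k + 1 := le_antisymm h h'
      exact ha

/-- Key lemma: an element of the pro-`p` completion whose `n`-th component vanishes is a
`p^n`-th multiple. -/
lemma exists_nsmul_eq (x : ↥(pComp A p)) (n : ℕ)
    (hx : (x : ∀ m, A ⧸ nMul A (p ^ m)) n = 0) :
    ∃ y : ↥(pComp A p), p ^ n • y = x := by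
  classical
  -- choose representatives
  obtain ⟨ℓ, hℓ⟩ : ∃ ℓ : ℕ → A, ∀ k,
      (QuotientAddGroup.mk (ℓ k) : A ⧸ nMul A (p ^ k)) = (x : ∀ m, A ⧸ nMul A (p ^ m)) k := by
    choose ℓ hℓ using fun k => QuotientAddGroup.mk_surjective ((x : ∀ m, A ⧸ nMul A (p ^ m)) k)
    exact ⟨ℓ, hℓ⟩
  set P : ℕ → A → Prop := fun k a => p ^ n • a - ℓ (n + k) ∈ nMul A (p ^ (n + k)) with hP
  -- base case
  have h0 : ∃ a, P 0 a := by
    have : ℓ n ∈ nMul A (p ^ n) := by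
      rw [← QuotientAddGroup.eq_zero_iff, hℓ n, hx]
    obtain ⟨a, ha⟩ := this
    dsimp only at ha
    refine ⟨a, ?_⟩
    show p ^ n • a - ℓ (n + 0) ∈ nMul A (p ^ (n + 0))
    rw [show ℓ (n + 0) = ℓ n from rfl, ha, sub_self]
    exact AddSubgroup.zero_mem _
  -- inductive step
  have hstep : ∀ k a, P k a → ∃ a', P (k + 1) a' ∧ a' - a ∈ nMul A (p ^ k) := by
    intro k a ha
    have h1 : ℓ (n + (k + 1)) - ℓ (n + k) ∈ nMul A (p ^ (n + k)) := by
      rw [← QuotientAddGroup.eq_iff_sub_mem, hℓ (n + k)]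
      exact pComp_proj_eq x (Nat.le_succ _) _ (hℓ (n + (k + 1)))
    have h2 : ℓ (n + (k + 1)) - p ^ n • a ∈ nMul A (p ^ (n + k)) := by
      have := AddSubgroup.add_mem _ h1 (AddSubgroup.neg_mem _ ha)
      convert this using 1
      abel
    obtain ⟨d, hd⟩ := h2
    dsimp only at hd
    refine ⟨a + p ^ k • d, ?_, ⟨d, by dsimp only; abel⟩⟩
    have heq : p ^ n • (a + p ^ k • d) - ℓ (n + (k + 1)) = 0 := by
      rw [smul_add, smul_smul, ← pow_add, hd]
      abel
    show p ^ n • (a + p ^ k • d) - ℓ (n + (k + 1)) ∈ nMul A (p ^ (n + (k + 1)))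
    rw [heq]
    exact AddSubgroup.zero_mem _
  choose step hstep1 hstep2 using hstep
  obtain ⟨a0, ha0⟩ := h0
  let b : ∀ k : ℕ, {a : A // P k a} := fun k =>
    Nat.rec ⟨a0, ha0⟩ (fun k ih => ⟨step k ih.1 ih.2, hstep1 k ih.1 ih.2⟩) k
  have hbsucc : ∀ k, (b (k + 1)).1 - (b k).1 ∈ nMul A (p ^ k) := fun k =>
    hstep2 k (b k).1 (b k).2
  -- assemble y
  refine ⟨⟨fun k => QuotientAddGroup.mk (b k).1, ?_⟩, ?_⟩
  · intro k
    rw [projn_mk, QuotientAddGroup.eq_iff_sub_mem]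
    exact hbsucc k
  · -- show p^n • y = x
    apply Subtype.ext
    funext j
    show p ^ n • (QuotientAddGroup.mk (b j).1 : A ⧸ nMul A (p ^ j))
        = (x : ∀ m, A ⧸ nMul A (p ^ m)) j
    have hPj : p ^ n • (b j).1 - ℓ (n + j) ∈ nMul A (p ^ j) :=
      nMul_le (pow_dvd_pow p (Nat.le_add_left j n)) (b j).2
    have : (QuotientAddGroup.mk (p ^ n • (b j).1) : A ⧸ nMul A (p ^ j))
        = QuotientAddGroup.mk (ℓ (n + j)) := by
      rw [QuotientAddGroup.eq_iff_sub_mem]; exact hPj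
    calc p ^ n • (QuotientAddGroup.mk (b j).1 : A ⧸ nMul A (p ^ j))
        = QuotientAddGroup.mk (p ^ n • (b j).1) := rfl
      _ = QuotientAddGroup.mk (ℓ (n + j)) := this
      _ = (x : ∀ m, A ⧸ nMul A (p ^ m)) j :=
          pComp_proj_eq x (Nat.le_add_left j n) _ (hℓ (n + j))

/-- A `p^m`-th multiple in the completion has vanishing `m`-th component. -/
lemma comp_nsmul_eq_zero (y : ↥(pComp A p)) (m : ℕ) :
    ((p ^ m • y : ↥(pComp A p)) : ∀ m, A ⧸ nMul A (p ^ m)) m = 0 := by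
  obtain ⟨a, ha⟩ := QuotientAddGroup.mk_surjective ((y : ∀ m, A ⧸ nMul A (p ^ m)) m)
  show p ^ m • (y : ∀ m, A ⧸ nMul A (p ^ m)) m = 0
  rw [← ha]
  show (QuotientAddGroup.mk (p ^ m • a) : A ⧸ nMul A (p ^ m)) = 0
  exact (QuotientAddGroup.eq_zero_iff _).2 ⟨a, rfl⟩

end Aux


/-- For any abelian group `A` and prime `p`, the natural map from the pro-`p`
completion `Â^p := lim_m A/p^m A` to its own pro-`p` completion is bijective; i.e., the
pro-`p` completion of an abelian group is `p`-adically complete. -/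
theorem stmt6 (A : Type*) [AddCommGroup A] (p : ℕ) (hp : p.Prime) :
    Function.Bijective (toPComp (pComp A p) p) := by
  classical
  constructor
  · -- injective
    refine (injective_iff_map_eq_zero _).2 fun x hx => ?_
    apply Subtype.ext
    funext m
    have hm : (QuotientAddGroup.mk x : ↥(pComp A p) ⧸ nMul (↥(pComp A p)) (p ^ m)) = 0 :=
      congrFun (congrArg Subtype.val hx) m
    obtain ⟨y, hy⟩ := (QuotientAddGroup.eq_zero_iff _).1 hm
    dsimp only at hy
    have hz := comp_nsmul_eq_zero y m
    rw [hy] at hz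
    exact hz
  · -- surjective
    intro z
    -- representatives of the components of z
    obtain ⟨w, hw⟩ : ∃ w : ℕ → ↥(pComp A p), ∀ m,
        (QuotientAddGroup.mk (w m) : ↥(pComp A p) ⧸ nMul (↥(pComp A p)) (p ^ m))
          = (z : ∀ m, ↥(pComp A p) ⧸ nMul (↥(pComp A p)) (p ^ m)) m := by
      choose w hw using fun m => QuotientAddGroup.mk_surjective
        ((z : ∀ m, ↥(pComp A p) ⧸ nMul (↥(pComp A p)) (p ^ m)) m)
      exact ⟨w, hw⟩
    -- successive representatives differ by p^m-th multiples
    have hwd : ∀ m, w (m + 1) - w m ∈ nMul (↥(pComp A p)) (p ^ m) := by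
      intro m
      rw [← QuotientAddGroup.eq_iff_sub_mem, hw m]
      have hc := z.2 m
      rw [← hc, ← hw (m + 1), projn_mk]
    -- define the candidate preimage
    have hcompat : ∀ m, projn A (pow_dvd_pow p (Nat.le_succ m))
        ((w (m + 1) : ∀ k, A ⧸ nMul A (p ^ k)) (m + 1))
          = (w m : ∀ k, A ⧸ nMul A (p ^ k)) m := by
      intro m
      rw [(w (m + 1)).2 m]
      obtain ⟨u, hu⟩ := hwd m
      dsimp only at hu
      have hsub : (w (m + 1) : ∀ k, A ⧸ nMul A (p ^ k)) m
          - (w m : ∀ k, A ⧸ nMul A (p ^ k)) m = 0 := by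
        have h1 : ((w (m + 1) - w m : ↥(pComp A p)) : ∀ k, A ⧸ nMul A (p ^ k)) m
            = ((p ^ m • u : ↥(pComp A p)) : ∀ k, A ⧸ nMul A (p ^ k)) m := by rw [← hu]
        have h2 := comp_nsmul_eq_zero u m
        rw [h2] at h1
        exact h1
      exact sub_eq_zero.mp hsub
    set x : ↥(pComp A p) := ⟨fun m => (w m : ∀ k, A ⧸ nMul A (p ^ k)) m, hcompat⟩ with hxdef
    refine ⟨x, ?_⟩
    apply Subtype.ext
    funext m
    show (QuotientAddGroup.mk x : ↥(pComp A p) ⧸ nMul (↥(pComp A p)) (p ^ m))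
        = (z : ∀ m, ↥(pComp A p) ⧸ nMul (↥(pComp A p)) (p ^ m)) m
    rw [← hw m, QuotientAddGroup.eq_iff_sub_mem]
    -- x - w m has vanishing m-th component
    have hzero : ((x - w m : ↥(pComp A p)) : ∀ k, A ⧸ nMul A (p ^ k)) m = 0 := by
      show (x : ∀ k, A ⧸ nMul A (p ^ k)) m - (w m : ∀ k, A ⧸ nMul A (p ^ k)) m = 0
      rw [hxdef]
      exact sub_self _
    obtain ⟨y, hy⟩ := exists_nsmul_eq (x - w m) m hzero
    exact ⟨y, hy⟩
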